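/- arXiv:math/0612461 — 2 statements merged into one kernel-verified Lean document; each statement's English description precedes it below -/
import Mathlib

section
/- Let 0 ≤ k ≤ l and let G be a connected graph of order n with no B_{k+1} and no K_{2,l+1} such that μ(G) = (k - l + 1 + sqrt((k-l+1)² + 4l(n-1)))/2 and μ(G) < Δ(G). Then every two adjacent vertices of G have exactly k common neighbors and every two nonadjacent vertices have exactly l common neighbors. -/
/-- The spectral radius (largest adjacency eigenvalue) of a graph. -/
noncomputable def graphMu {n : ℕ} (G : SimpleGraph (Fin n)) [DecidableRel G.Adj] : ℝ :=
  sSup {x : ℝ | Module.End.HasEigenvalue (Matrix.toLin' (G.adjMatrix ℝ)) x}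

-- \`G\` contains no book \`B_{k+1}\`: adjacent vertices have at most \`k\` common neighbors.
-- \`G\` contains no \`K_{2,l+1}\`: nonadjacent vertices have at most \`l\` common neighbors.
open Matrix SimpleGraph

section
variable {n : ℕ}

lemma hasEig_toLin'_iff (A : Matrix (Fin n) (Fin n) ℝ) (μ : ℝ) :
    Module.End.HasEigenvalue (Matrix.toLin' A) μ ↔
      ∃ v : Fin n → ℝ, v ≠ 0 ∧ A *ᵥ v = μ • v := by
  constructor
  · intro h
    obtain ⟨v, hv⟩ := h.exists_hasEigenvector
    exact ⟨v, hv.2, by simpa [Matrix.toLin'_apply] using hv.apply_eq_smul⟩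
  · rintro ⟨v, hv0, hv⟩
    exact Module.End.hasEigenvalue_of_hasEigenvector
      ⟨Module.End.mem_eigenspace_iff.2 (by simpa [Matrix.toLin'_apply] using hv), hv0⟩

lemma hasEig_toEuclideanLin_iff (A : Matrix (Fin n) (Fin n) ℝ) (μ : ℝ) :
    Module.End.HasEigenvalue (Matrix.toEuclideanLin A) μ ↔
      ∃ v : Fin n → ℝ, v ≠ 0 ∧ A *ᵥ v = μ • v := by
  constructor
  · intro h
    obtain ⟨v, hv⟩ := h.exists_hasEigenvector
    refine ⟨(WithLp.equiv 2 _) v, ?_, ?_⟩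
    · simpa using hv.2
    · have := hv.apply_eq_smul
      rw [Matrix.toEuclideanLin_apply] at this
      have := congrArg (WithLp.equiv 2 (Fin n → ℝ)) this
      simpa using this
  · rintro ⟨v, hv0, hv⟩
    refine Module.End.hasEigenvalue_of_hasEigenvector
      ⟨Module.End.mem_eigenspace_iff.2 ?_, ?_⟩ (x := (WithLp.equiv 2 (Fin n → ℝ)).symm v)
    · rw [Matrix.toEuclideanLin_apply]
      simp [hv]
    · simpa using hv0

lemma graphMu_spec (hn : 0 < n) (G : SimpleGraph (Fin n)) [DecidableRel G.Adj] :
    (∃ v : Fin n → ℝ, v ≠ 0 ∧ G.adjMatrix ℝ *ᵥ v = graphMu G • v) ∧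
    (∀ y : Fin n → ℝ, y ⬝ᵥ (G.adjMatrix ℝ *ᵥ y) ≤ graphMu G * (y ⬝ᵥ y)) := by
  classical
  haveI : NeZero n := ⟨hn.ne'⟩
  set A := G.adjMatrix ℝ with hA
  set T := Matrix.toEuclideanLin A with hT
  have hherm : A.IsHermitian :=
    (Matrix.conjTranspose_eq_transpose_of_trivial A).trans (isSymm_adjMatrix G)
  have hsym : T.IsSymmetric := Matrix.isHermitian_iff_isSymmetric.1 hherm
  have hinner : ∀ z : EuclideanSpace ℝ (Fin n),
      (inner ℝ (T z) z : ℝ) = (WithLp.equiv 2 _ z) ⬝ᵥ (A *ᵥ (WithLp.equiv 2 _ z)) := by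
    intro z
    rw [PiLp.inner_apply]
    simp only [RCLike.inner_apply, conj_trivial]
    rw [dotProduct]
    apply Finset.sum_congr rfl
    intro i _
    rw [Matrix.toEuclideanLin_apply]
    simp [mul_comm]
  have hnormsq : ∀ z : EuclideanSpace ℝ (Fin n),
      ‖z‖ ^ 2 = (WithLp.equiv 2 _ z) ⬝ᵥ (WithLp.equiv 2 _ z) := by
    intro z
    rw [← real_inner_self_eq_norm_sq, PiLp.inner_apply]
    simp [dotProduct, sq]
  -- boundedness of Rayleigh quotients
  set Tc := LinearMap.toContinuousLinearMap T with hTc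
  have hray_le : ∀ z : EuclideanSpace ℝ (Fin n), z ≠ 0 →
      RCLike.re (inner ℝ (T z) z : ℝ) / ‖z‖ ^ 2 ≤ ‖Tc‖ := by
    intro z hz
    have h1 : (inner ℝ (T z) z : ℝ) ≤ ‖T z‖ * ‖z‖ := real_inner_le_norm _ _
    have h2 : ‖T z‖ ≤ ‖Tc‖ * ‖z‖ := Tc.le_opNorm z
    have hz2 : (0:ℝ) < ‖z‖ := norm_pos_iff.2 hz
    rw [RCLike.re_to_real, div_le_iff₀ (by positivity)]
    nlinarith [norm_nonneg (T z), norm_nonneg z]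
  have hbdd : BddAbove (Set.range fun x : {x : EuclideanSpace ℝ (Fin n) // x ≠ 0} =>
      RCLike.re (inner ℝ (T x) (x : EuclideanSpace ℝ (Fin n)) : ℝ) / ‖(x : EuclideanSpace ℝ (Fin n))‖ ^ 2) := by
    refine ⟨‖Tc‖, ?_⟩
    rintro _ ⟨x, rfl⟩
    exact hray_le x x.2
  set μR : ℝ := ⨆ x : {x : EuclideanSpace ℝ (Fin n) // x ≠ 0},
      RCLike.re (inner ℝ (T x) (x : EuclideanSpace ℝ (Fin n)) : ℝ) / ‖(x : EuclideanSpace ℝ (Fin n))‖ ^ 2 with hμR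
  have hEv : Module.End.HasEigenvalue T μR := hsym.hasEigenvalue_iSup_of_finiteDimensional
  -- every eigenvalue of T is at most μR
  have hle : ∀ ν : ℝ, Module.End.HasEigenvalue T ν → ν ≤ μR := by
    intro ν hν
    obtain ⟨v, hv⟩ := hν.exists_hasEigenvector
    have hvne : v ≠ 0 := hv.2
    have hvv : (0:ℝ) < inner ℝ v v :=
      lt_of_le_of_ne real_inner_self_nonneg (Ne.symm (inner_self_ne_zero.2 hvne))
    have : RCLike.re (inner ℝ (T v) v : ℝ) / ‖v‖ ^ 2 = ν := by
      rw [hv.apply_eq_smul, real_inner_smul_left, ← real_inner_self_eq_norm_sq,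
        RCLike.re_to_real, mul_div_assoc, div_self hvv.ne', mul_one]
    calc ν = _ := this.symm
      _ ≤ μR := le_ciSup hbdd ⟨v, hvne⟩
  -- graphMu G = μR
  have hset : {x : ℝ | Module.End.HasEigenvalue (Matrix.toLin' A) x} =
      {x : ℝ | Module.End.HasEigenvalue T x} := by
    ext x
    rw [Set.mem_setOf_eq, Set.mem_setOf_eq, hasEig_toLin'_iff, hT, hasEig_toEuclideanLin_iff]
  have hmu : graphMu G = μR := by
    rw [graphMu, ← hA, hset]
    apply le_antisymm
    · exact csSup_le ⟨μR, hEv⟩ fun ν hν => hle ν hν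
    · exact le_csSup ⟨μR, fun ν hν => hle ν hν⟩ hEv
  constructor
  · obtain ⟨v, hv0, hv⟩ := (hasEig_toEuclideanLin_iff A (μR)).1 hEv
    exact ⟨v, hv0, by rw [hmu]; exact hv⟩
  · intro y
    rw [hmu]
    rcases eq_or_ne y 0 with rfl | hy
    · simp
    · set z : EuclideanSpace ℝ (Fin n) := (WithLp.equiv 2 (Fin n → ℝ)).symm y with hz
      have hzne : z ≠ 0 := by simpa [hz] using hy
      have h1 : RCLike.re (inner ℝ (T z) z : ℝ) / ‖z‖ ^ 2 ≤ μR := le_ciSup hbdd ⟨z, hzne⟩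
      have h2 : (0:ℝ) < ‖z‖ ^ 2 := pow_pos (norm_pos_iff.2 hzne) 2
      rw [RCLike.re_to_real, div_le_iff₀ h2] at h1
      have h3 := hinner z
      have h4 := hnormsq z
      simp only [hz, Equiv.apply_symm_apply] at h3 h4
      rw [← h3, ← h4]
      linarith [h1]

lemma perron_aux (G : SimpleGraph (Fin n)) [DecidableRel G.Adj] (μ : ℝ)
    (hray : ∀ y : Fin n → ℝ, y ⬝ᵥ (G.adjMatrix ℝ *ᵥ y) ≤ μ * (y ⬝ᵥ y))
    (v : Fin n → ℝ) (hv0 : v ≠ 0) (hv : G.adjMatrix ℝ *ᵥ v = μ • v)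
    (hconn : G.Connected) :
    ∃ x : Fin n → ℝ, (∀ i, 0 < x i) ∧ G.adjMatrix ℝ *ᵥ x = μ • x := by
  classical
  set A := G.adjMatrix ℝ with hA
  set w : Fin n → ℝ := fun i => |v i| with hw
  have hAnn : ∀ i j, 0 ≤ A i j := by
    intro i j; simp only [hA, SimpleGraph.adjMatrix_apply]; positivity
  -- step 1 : quadratic form increases
  have hstep1 : v ⬝ᵥ (A *ᵥ v) ≤ w ⬝ᵥ (A *ᵥ w) := by
    simp only [dotProduct, Matrix.mulVec, dotProduct, Finset.mul_sum]
    refine Finset.sum_le_sum fun i _ => Finset.sum_le_sum fun j _ => ?_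
    have h1 : v i * (A i j * v j) = A i j * (v i * v j) := by ring
    have h2 : w i * (A i j * w j) = A i j * |v i * v j| := by
      rw [hw]; simp [abs_mul]; ring
    rw [h1, h2]
    exact mul_le_mul_of_nonneg_left (le_abs_self _) (hAnn i j)
  have hvv : v ⬝ᵥ (A *ᵥ v) = μ * (v ⬝ᵥ v) := by
    rw [hv]; simp [dotProduct_smul]
  have hww : w ⬝ᵥ w = v ⬝ᵥ v := by
    simp only [dotProduct, hw, abs_mul_abs_self]
  have hq : w ⬝ᵥ (A *ᵥ w) = μ * (w ⬝ᵥ w) := by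
    refine le_antisymm (hray w) ?_
    rw [hww, ← hvv]; exact hstep1
  -- B = μ•1 - A is PSD, and w is in its kernel
  set B : Matrix (Fin n) (Fin n) ℝ := μ • (1 : Matrix (Fin n) (Fin n) ℝ) - A with hB
  have hBv : ∀ y : Fin n → ℝ, B *ᵥ y = μ • y - A *ᵥ y := by
    intro y; rw [hB, Matrix.sub_mulVec, Matrix.smul_mulVec, Matrix.one_mulVec]
  have hBq : ∀ y : Fin n → ℝ, 0 ≤ y ⬝ᵥ (B *ᵥ y) := by
    intro y
    rw [hBv, dotProduct_sub, dotProduct_smul]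
    have := hray y
    simp only [smul_eq_mul]
    linarith
  have hBw : w ⬝ᵥ (B *ᵥ w) = 0 := by
    rw [hBv, dotProduct_sub, dotProduct_smul, hq]; simp
  have hBsymm : Bᵀ = B := by
    rw [hB, Matrix.transpose_sub, Matrix.transpose_smul, Matrix.transpose_one,
      (isSymm_adjMatrix G : Aᵀ = A)]
  set u : Fin n → ℝ := B *ᵥ w with hu
  have hdot : ∀ t : ℝ, 0 ≤ 2 * t * (u ⬝ᵥ u) + t ^ 2 * (u ⬝ᵥ (B *ᵥ u)) := by
    intro t
    have h0 := hBq (w + t • u)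
    rw [Matrix.mulVec_add, Matrix.mulVec_smul, add_dotProduct,
      smul_dotProduct, dotProduct_add, dotProduct_smul,
      dotProduct_add, dotProduct_smul] at h0
    have hwBu : w ⬝ᵥ (B *ᵥ u) = u ⬝ᵥ u := by
      rw [Matrix.dotProduct_mulVec, ← Matrix.mulVec_transpose, hBsymm, ← hu]
    have huBw : u ⬝ᵥ (B *ᵥ w) = u ⬝ᵥ u := by rw [← hu]
    rw [hwBu, huBw, hBw] at h0
    simp only [smul_eq_mul] at h0
    nlinarith [h0]
  have huu : u ⬝ᵥ u = 0 := by
    have hc : 0 ≤ u ⬝ᵥ (B *ᵥ u) := hBq u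
    have hb : 0 ≤ u ⬝ᵥ u := by
      simp only [dotProduct]
      exact Finset.sum_nonneg fun i _ => mul_self_nonneg _
    set b := u ⬝ᵥ u
    set c := u ⬝ᵥ (B *ᵥ u)
    have hc1 : (0:ℝ) < c + 1 := by linarith
    by_contra hbne
    have hbpos : 0 < b := lt_of_le_of_ne hb (Ne.symm hbne)
    have ht := hdot (-(b / (c + 1)))
    have hspos : 0 < b / (c + 1) := div_pos hbpos hc1
    have hs : b / (c + 1) * (c + 1) = b := div_mul_cancel₀ b hc1.ne'
    nlinarith [ht, hs, hspos, hc, mul_pos hspos hspos]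
  have hu0 : u = 0 := by
    funext i
    have : ∀ i ∈ Finset.univ, (0:ℝ) ≤ u i * u i := fun i _ => mul_self_nonneg _
    have := (Finset.sum_eq_zero_iff_of_nonneg this).1 huu i (Finset.mem_univ i)
    exact mul_self_eq_zero.1 this
  have hAw : A *ᵥ w = μ • w := by
    have h0 : B *ᵥ w = 0 := hu0
    rw [hBv] at h0
    exact (sub_eq_zero.1 h0).symm
  -- positivity via connectivity
  have hwnn : ∀ i, 0 ≤ w i := fun i => abs_nonneg _
  have hzero : ∀ i, w i = 0 → ∀ j, G.Adj i j → w j = 0 := by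
    intro i hi j hij
    have h1 : (A *ᵥ w) i = 0 := by rw [hAw]; simp [hi]
    have h2 : ∑ z, A i z * w z = 0 := by
      rw [← h1]; simp [Matrix.mulVec, dotProduct]
    have h3 := (Finset.sum_eq_zero_iff_of_nonneg
      (fun z _ => mul_nonneg (hAnn i z) (hwnn z))).1 h2 j (Finset.mem_univ j)
    simpa [hA, SimpleGraph.adjMatrix_apply, hij] using h3
  have hreach : ∀ i j : Fin n, G.Reachable i j → w i = 0 → w j = 0 := by
    intro i j hr
    obtain ⟨p⟩ := hr
    induction p with
    | nil => exact id
    | cons h p ih => intro hi; exact ih (hzero _ hi _ h)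
  have hne : ∃ i, w i ≠ 0 := by
    by_contra h
    push_neg at h
    exact hv0 (funext fun i => abs_eq_zero.1 (h i))
  obtain ⟨i0, hi0⟩ := hne
  refine ⟨w, fun i => ?_, hAw⟩
  rcases (hwnn i).lt_or_eq with h | h
  · exact h
  · exact absurd (hreach i i0 (hconn i i0) h.symm) hi0
variable {n : ℕ} (G : SimpleGraph (Fin n)) [DecidableRel G.Adj]

lemma adj_sym (i j : Fin n) : G.adjMatrix ℝ i j = G.adjMatrix ℝ j i := by
  simp [SimpleGraph.adjMatrix_apply, G.adj_comm]

lemma row_sum (i : Fin n) : ∑ j, G.adjMatrix ℝ i j = (G.degree i : ℝ) := by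
  simp [SimpleGraph.adjMatrix_apply, SimpleGraph.degree, SimpleGraph.neighborFinset,
    Finset.sum_ite_mem]

lemma common_eq (i j : Fin n) :
    ∑ z, G.adjMatrix ℝ i z * G.adjMatrix ℝ j z =
      ((G.neighborFinset i ∩ G.neighborFinset j).card : ℝ) := by
  have : ∀ z, G.adjMatrix ℝ i z * G.adjMatrix ℝ j z =
      if z ∈ G.neighborFinset i ∩ G.neighborFinset j then (1:ℝ) else 0 := by
    intro z
    by_cases h1 : G.Adj i z <;> by_cases h2 : G.Adj j z <;>
      simp [SimpleGraph.adjMatrix_apply, h1, h2, SimpleGraph.mem_neighborFinset]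
  rw [Finset.sum_congr rfl fun z _ => this z, Finset.sum_ite_mem,
    Finset.univ_inter, Finset.sum_const, nsmul_eq_mul, mul_one]
variable {n : ℕ} (G : SimpleGraph (Fin n)) [DecidableRel G.Adj]

lemma filter_adj_sum (g : Fin n → Fin n → ℝ) :
    ∑ p ∈ (Finset.univ ×ˢ Finset.univ).filter (fun p : Fin n × Fin n => G.Adj p.1 p.2),
      g p.1 p.2 = ∑ i, ∑ j, G.adjMatrix ℝ i j * g i j := by
  rw [Finset.sum_filter, Finset.sum_product]
  refine Finset.sum_congr rfl fun i _ => Finset.sum_congr rfl fun j _ => ?_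
  by_cases h : G.Adj i j <;> simp [h]

lemma split3 (g : Fin n × Fin n → ℝ) :
    ∑ p ∈ Finset.univ ×ˢ Finset.univ, g p =
      (∑ p ∈ (Finset.univ ×ˢ Finset.univ).filter
          (fun p : Fin n × Fin n => p.1 = p.2), g p) +
      ((∑ p ∈ (Finset.univ ×ˢ Finset.univ).filter
          (fun p : Fin n × Fin n => G.Adj p.1 p.2), g p) +
       (∑ p ∈ (Finset.univ ×ˢ Finset.univ).filter
          (fun p : Fin n × Fin n => p.1 ≠ p.2 ∧ ¬ G.Adj p.1 p.2), g p)) := by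
  rw [← Finset.sum_filter_add_sum_filter_not (Finset.univ ×ˢ Finset.univ)
    (fun p : Fin n × Fin n => p.1 = p.2) g]
  congr 1
  rw [← Finset.sum_filter_add_sum_filter_not
    ((Finset.univ ×ˢ Finset.univ).filter (fun p : Fin n × Fin n => ¬ p.1 = p.2))
    (fun p : Fin n × Fin n => G.Adj p.1 p.2) g, Finset.filter_filter, Finset.filter_filter]
  have hset : (Finset.univ ×ˢ Finset.univ).filter
      (fun p : Fin n × Fin n => ¬ p.1 = p.2 ∧ G.Adj p.1 p.2) =
      (Finset.univ ×ˢ Finset.univ).filter (fun p : Fin n × Fin n => G.Adj p.1 p.2) :=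
    Finset.filter_congr fun p _ =>
      ⟨fun h => h.2, fun h => ⟨G.ne_of_adj h, h⟩⟩
  rw [hset]

lemma diag_sum (g : Fin n × Fin n → ℝ) :
    ∑ p ∈ (Finset.univ ×ˢ Finset.univ).filter
        (fun p : Fin n × Fin n => p.1 = p.2), g p = ∑ i, g (i, i) := by
  rw [Finset.sum_filter, Finset.sum_product]
  simp

end

theorem equality_case {n k l : ℕ} (hkl : k ≤ l) (G : SimpleGraph (Fin n))
    [DecidableRel G.Adj] (hconn : G.Connected)
    (hbook : ∀ u v : Fin n, G.Adj u v →
      (G.neighborFinset u ∩ G.neighborFinset v).card ≤ k)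
    (hK2l : ∀ u v : Fin n, u ≠ v → ¬ G.Adj u v →
      (G.neighborFinset u ∩ G.neighborFinset v).card ≤ l)
    (heq : graphMu G =
      ((k : ℝ) - l + 1 +
        Real.sqrt (((k : ℝ) - l + 1) ^ 2 + 4 * l * ((n : ℝ) - 1))) / 2)
    (hlt : graphMu G < (G.maxDegree : ℝ)) :
    (∀ u v : Fin n, G.Adj u v →
      (G.neighborFinset u ∩ G.neighborFinset v).card = k) ∧
    (∀ u v : Fin n, u ≠ v → ¬ G.Adj u v →
      (G.neighborFinset u ∩ G.neighborFinset v).card = l) := by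
  classical
  haveI hne : Nonempty (Fin n) := hconn.nonempty
  have hn : 0 < n := Fin.pos_iff_nonempty.2 hne
  rcases Nat.eq_zero_or_pos l with rfl | hl
  · -- trivial case l = 0 (hence k = 0)
    have hk0 : k = 0 := Nat.le_zero.1 hkl
    subst hk0
    exact ⟨fun u v huv => Nat.le_zero.1 (hbook u v huv),
      fun u v hne' hnadj => Nat.le_zero.1 (hK2l u v hne' hnadj)⟩
  · set A := G.adjMatrix ℝ with hA
    set μ := graphMu G with hμ
    obtain ⟨⟨v, hv0, hv⟩, hray⟩ := graphMu_spec hn G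
    obtain ⟨x, hx, hAx⟩ := perron_aux G μ hray v hv0 hv hconn
    set S := ∑ i, x i * x i with hS
    set σ := ∑ i, x i with hσ
    have hSpos : 0 < S := Finset.sum_pos (fun i _ => mul_pos (hx i) (hx i))
      Finset.univ_nonempty
    have F1 : ∀ i, ∑ j, A i j * x j = μ * x i := by
      intro i
      have h := congrFun hAx i
      simp only [Matrix.mulVec, dotProduct] at h
      rw [Pi.smul_apply, smul_eq_mul] at h
      exact h
    have F2 : ∑ i, ∑ j, A i j * (x i * x j) = μ * S := by
      have h1 : ∀ i, ∑ j, A i j * (x i * x j) = x i * (μ * x i) := by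
        intro i
        rw [← F1 i, Finset.mul_sum]
        exact Finset.sum_congr rfl fun j _ => by ring
      rw [Finset.sum_congr rfl fun i _ => h1 i, hS, Finset.mul_sum]
      exact Finset.sum_congr rfl fun i _ => by ring
    set c : Fin n → Fin n → ℝ :=
      fun i j => ((G.neighborFinset i ∩ G.neighborFinset j).card : ℝ) with hc
    have F3 : μ * (μ * S) = ∑ j, ∑ z, c j z * (x j * x z) := by
      have e0 : ∀ i, (μ * x i) * (μ * x i) = ∑ j, ∑ z, (A i j * x j) * (A i z * x z) := by
        intro i
        rw [← F1 i, Finset.sum_mul_sum]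
      have e1 : μ * (μ * S) = ∑ i, (μ * x i) * (μ * x i) := by
        rw [hS, Finset.mul_sum, Finset.mul_sum]
        exact Finset.sum_congr rfl fun i _ => by ring
      rw [e1, Finset.sum_congr rfl fun i _ => e0 i, Finset.sum_comm]
      refine Finset.sum_congr rfl fun j _ => ?_
      rw [Finset.sum_comm]
      refine Finset.sum_congr rfl fun z _ => ?_
      have h2 : ∀ i, (A i j * x j) * (A i z * x z) = (A j i * A z i) * (x j * x z) := by
        intro i; simp only [hA]; rw [adj_sym G i j, adj_sym G i z]; ring
      rw [Finset.sum_congr rfl fun i _ => h2 i, ← Finset.sum_mul]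
      simp only [hA]
      rw [common_eq]
    set P : Finset (Fin n × Fin n) := Finset.univ ×ˢ Finset.univ with hP
    set F : Fin n × Fin n → ℝ := fun p => c p.1 p.2 * (x p.1 * x p.2) with hF
    set xx : Fin n × Fin n → ℝ := fun p => x p.1 * x p.2 with hxx
    have hPF : ∑ p ∈ P, F p = μ * (μ * S) := by
      rw [hP, Finset.sum_product]
      exact F3.symm
    have hdeg : ∀ i, c i i = (G.degree i : ℝ) := by
      intro i
      show ((G.neighborFinset i ∩ G.neighborFinset i).card : ℝ) = _
      rw [Finset.inter_self]
      rfl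
    have hDiagF : ∑ p ∈ P.filter (fun p => p.1 = p.2), F p =
        ∑ i, (G.degree i : ℝ) * (x i * x i) := by
      rw [hP, _root_.diag_sum]
      refine Finset.sum_congr rfl fun i _ => ?_
      show c i i * (x i * x i) = _
      rw [hdeg i]
    have hDiagxx : ∑ p ∈ P.filter (fun p => p.1 = p.2), xx p = S := by
      rw [hP, _root_.diag_sum]
    have hPxx : ∑ p ∈ P, xx p = σ * σ := by
      rw [hP, Finset.sum_product, hσ, Finset.sum_mul]
      refine Finset.sum_congr rfl fun i _ => ?_
      rw [Finset.mul_sum]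
    have hAdjxx : ∑ p ∈ P.filter (fun p => G.Adj p.1 p.2), xx p = μ * S := by
      rw [hP]
      rw [show (∑ p ∈ (Finset.univ ×ˢ Finset.univ).filter
          (fun p : Fin n × Fin n => G.Adj p.1 p.2), xx p) =
          ∑ p ∈ (Finset.univ ×ˢ Finset.univ).filter
          (fun p : Fin n × Fin n => G.Adj p.1 p.2), x p.1 * x p.2 from rfl]
      rw [filter_adj_sum G (fun i j => x i * x j)]
      exact F2
    have hNonxx : ∑ p ∈ P.filter (fun p => p.1 ≠ p.2 ∧ ¬ G.Adj p.1 p.2), xx p =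
        σ * σ - S - μ * S := by
      have h := split3 G xx
      rw [← hP] at h
      rw [hPxx, hDiagxx, hAdjxx] at h
      linarith
    -- degree sum bound
    have hl1 : (1:ℝ) ≤ (l:ℝ) := by exact_mod_cast hl
    have hE : ∑ i, (G.degree i : ℝ) * (x i * x i) ≤
        μ * S + (l:ℝ) * ((n:ℝ) * S - σ * σ) := by
      have c1 : ∑ i, ∑ j, A i j * (x i * x i) = ∑ i, (G.degree i : ℝ) * (x i * x i) := by
        refine Finset.sum_congr rfl fun i _ => ?_
        simp only [hA]
        rw [← Finset.sum_mul, row_sum]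
      have c2 : ∑ i, ∑ j, A i j * (x j * x j) = ∑ i, (G.degree i : ℝ) * (x i * x i) := by
        rw [Finset.sum_comm]
        refine Finset.sum_congr rfl fun j _ => ?_
        have h3 : ∀ i, A i j * (x j * x j) = A j i * (x j * x j) := by
          intro i; simp only [hA]; rw [adj_sym G i j]
        rw [Finset.sum_congr rfl fun i _ => h3 i]
        simp only [hA]
        rw [← Finset.sum_mul, row_sum]
      have e1 : ∑ i, ∑ j, A i j * ((x i - x j) * (x i - x j)) =
          (∑ i, ∑ j, A i j * (x i * x i)) + (∑ i, ∑ j, A i j * (x j * x j))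
            - 2 * (∑ i, ∑ j, A i j * (x i * x j)) := by
        have expand : ∀ i, ∑ j, A i j * ((x i - x j) * (x i - x j)) =
            (∑ j, A i j * (x i * x i)) + (∑ j, A i j * (x j * x j))
              - 2 * (∑ j, A i j * (x i * x j)) := by
          intro i
          rw [Finset.mul_sum, ← Finset.sum_add_distrib, ← Finset.sum_sub_distrib]
          exact Finset.sum_congr rfl fun j _ => by ring
        rw [Finset.sum_congr rfl fun i _ => expand i, Finset.mul_sum,
          ← Finset.sum_add_distrib, ← Finset.sum_sub_distrib]
      have e2 : ∑ i, ∑ j, ((x i - x j) * (x i - x j)) =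
          2 * ((n:ℝ) * S) - 2 * (σ * σ) := by
        have expand2 : ∀ i, ∑ j, ((x i - x j) * (x i - x j)) =
            (n:ℝ) * (x i * x i) + S - 2 * (x i * σ) := by
          intro i
          have q1 : ∑ _j : Fin n, x i * x i = (n:ℝ) * (x i * x i) := by
            rw [Finset.sum_const, Finset.card_univ, Fintype.card_fin, nsmul_eq_mul]
          have q3 : ∑ j, x i * x j = x i * σ := by rw [hσ, Finset.mul_sum]
          rw [← q1, ← q3, hS, Finset.mul_sum, ← Finset.sum_add_distrib,
            ← Finset.sum_sub_distrib]
          exact Finset.sum_congr rfl fun j _ => by ring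
        rw [Finset.sum_congr rfl fun i _ => expand2 i]
        rw [Finset.sum_sub_distrib, Finset.sum_add_distrib]
        have q1 : ∑ i, (n:ℝ) * (x i * x i) = (n:ℝ) * S := by rw [hS, Finset.mul_sum]
        have q2 : ∑ _i : Fin n, S = (n:ℝ) * S := by
          rw [Finset.sum_const, Finset.card_univ, Fintype.card_fin, nsmul_eq_mul]
        have q3 : ∑ i, 2 * (x i * σ) = 2 * (σ * σ) := by
          rw [hσ, Finset.mul_sum]
          rw [show (∑ i, 2 * (x i * ∑ j, x j)) = ∑ i, 2 * ((∑ j, x j) * x i) from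
            Finset.sum_congr rfl fun i _ => by ring]
          rw [← Finset.mul_sum, ← Finset.mul_sum]
        rw [q1, q2, q3]
        ring
      have e3 : ∑ i, ∑ j, A i j * ((x i - x j) * (x i - x j)) ≤
          (l:ℝ) * (∑ i, ∑ j, ((x i - x j) * (x i - x j))) := by
        rw [Finset.mul_sum]
        refine Finset.sum_le_sum fun i _ => ?_
        rw [Finset.mul_sum]
        refine Finset.sum_le_sum fun j _ => ?_
        have hsq : 0 ≤ (x i - x j) * (x i - x j) := mul_self_nonneg _
        have hAle : A i j ≤ (l:ℝ) := by
          rw [hA]; simp only [SimpleGraph.adjMatrix_apply]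
          split
          · exact hl1
          · positivity
        exact mul_le_mul_of_nonneg_right hAle hsq
      rw [e1, c1, c2, F2, e2] at e3
      linarith
    -- spectral equation
    have hn1 : (0:ℝ) ≤ (n:ℝ) - 1 := by
      have : (1:ℝ) ≤ (n:ℝ) := by exact_mod_cast hn
      linarith
    have hμeq : μ * μ = ((k:ℝ) - l + 1) * μ + (l:ℝ) * ((n:ℝ) - 1) := by
      have hD0 : (0:ℝ) ≤ ((k:ℝ) - (l:ℝ) + 1) ^ 2 + 4 * (l:ℝ) * ((n:ℝ) - 1) := by
        have : (0:ℝ) ≤ 4 * (l:ℝ) * ((n:ℝ) - 1) := by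
          apply mul_nonneg _ hn1
          positivity
        positivity
      have h1 : 2 * μ - ((k:ℝ) - l + 1) =
          Real.sqrt (((k:ℝ) - l + 1) ^ 2 + 4 * l * ((n:ℝ) - 1)) := by
        rw [heq]; ring
      have h2 := congrArg (fun t : ℝ => t * t) h1
      rw [Real.mul_self_sqrt hD0] at h2
      linear_combination h2 / 4
    -- bounds on sums over adjacent / nonadjacent pairs
    have hxxpos : ∀ p : Fin n × Fin n, 0 < xx p := fun p => mul_pos (hx _) (hx _)
    have hbA : ∀ p ∈ P.filter (fun p => G.Adj p.1 p.2), F p ≤ (k:ℝ) * xx p := by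
      intro p hp
      rw [Finset.mem_filter] at hp
      have hck : c p.1 p.2 ≤ (k:ℝ) := by
        show ((G.neighborFinset p.1 ∩ G.neighborFinset p.2).card : ℝ) ≤ (k:ℝ)
        exact_mod_cast hbook p.1 p.2 hp.2
      exact mul_le_mul_of_nonneg_right hck (le_of_lt (hxxpos p))
    have hbN : ∀ p ∈ P.filter (fun p => p.1 ≠ p.2 ∧ ¬ G.Adj p.1 p.2),
        F p ≤ (l:ℝ) * xx p := by
      intro p hp
      rw [Finset.mem_filter] at hp
      have hck : c p.1 p.2 ≤ (l:ℝ) := by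
        show ((G.neighborFinset p.1 ∩ G.neighborFinset p.2).card : ℝ) ≤ (l:ℝ)
        exact_mod_cast hK2l p.1 p.2 hp.2.1 hp.2.2
      exact mul_le_mul_of_nonneg_right hck (le_of_lt (hxxpos p))
    have hsum_a : ∑ p ∈ P.filter (fun p => G.Adj p.1 p.2), F p ≤ (k:ℝ) * (μ * S) := by
      calc ∑ p ∈ P.filter (fun p => G.Adj p.1 p.2), F p
          ≤ ∑ p ∈ P.filter (fun p => G.Adj p.1 p.2), (k:ℝ) * xx p :=
            Finset.sum_le_sum hbA
        _ = (k:ℝ) * (μ * S) := by rw [← Finset.mul_sum, hAdjxx]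
    have hsum_n : ∑ p ∈ P.filter (fun p => p.1 ≠ p.2 ∧ ¬ G.Adj p.1 p.2), F p ≤
        (l:ℝ) * (σ * σ - S - μ * S) := by
      calc ∑ p ∈ P.filter (fun p => p.1 ≠ p.2 ∧ ¬ G.Adj p.1 p.2), F p
          ≤ ∑ p ∈ P.filter (fun p => p.1 ≠ p.2 ∧ ¬ G.Adj p.1 p.2), (l:ℝ) * xx p :=
            Finset.sum_le_sum hbN
        _ = (l:ℝ) * (σ * σ - S - μ * S) := by rw [← Finset.mul_sum, hNonxx]
    -- squeeze
    have htot := split3 G F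
    rw [← hP, hPF, hDiagF] at htot
    have hfinal : μ * (μ * S) =
        (μ * S + (l:ℝ) * ((n:ℝ) * S - σ * σ)) +
          ((k:ℝ) * (μ * S) + (l:ℝ) * (σ * σ - S - μ * S)) := by
      linear_combination S * hμeq
    have hEq_a : ∑ p ∈ P.filter (fun p => G.Adj p.1 p.2), F p = (k:ℝ) * (μ * S) := by
      linarith
    have hEq_n : ∑ p ∈ P.filter (fun p => p.1 ≠ p.2 ∧ ¬ G.Adj p.1 p.2), F p =
        (l:ℝ) * (σ * σ - S - μ * S) := by
      linarith
    -- termwise equality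
    have hterm_a : ∀ p ∈ P.filter (fun p => G.Adj p.1 p.2), F p = (k:ℝ) * xx p := by
      refine (Finset.sum_eq_sum_iff_of_le hbA).1 ?_
      rw [hEq_a, ← Finset.mul_sum, hAdjxx]
    have hterm_n : ∀ p ∈ P.filter (fun p => p.1 ≠ p.2 ∧ ¬ G.Adj p.1 p.2),
        F p = (l:ℝ) * xx p := by
      refine (Finset.sum_eq_sum_iff_of_le hbN).1 ?_
      rw [hEq_n, ← Finset.mul_sum, hNonxx]
    constructor
    · intro u v huv
      have hmem : (u, v) ∈ P.filter (fun p => G.Adj p.1 p.2) := by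
        rw [Finset.mem_filter, hP]
        exact ⟨Finset.mem_product.2 ⟨Finset.mem_univ _, Finset.mem_univ _⟩, huv⟩
      have h := hterm_a (u, v) hmem
      have hxxne : xx (u, v) ≠ 0 := (hxxpos (u, v)).ne'
      have hcuv : c u v = (k:ℝ) := by
        have : c u v * xx (u, v) = (k:ℝ) * xx (u, v) := h
        exact mul_right_cancel₀ hxxne this
      have hcuv' : ((G.neighborFinset u ∩ G.neighborFinset v).card : ℝ) = (k:ℝ) := hcuv
      exact_mod_cast hcuv'
    · intro u v hne' hnadj
      have hmem : (u, v) ∈ P.filter (fun p => p.1 ≠ p.2 ∧ ¬ G.Adj p.1 p.2) := by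
        rw [Finset.mem_filter, hP]
        exact ⟨Finset.mem_product.2 ⟨Finset.mem_univ _, Finset.mem_univ _⟩, hne', hnadj⟩
      have h := hterm_n (u, v) hmem
      have hxxne : xx (u, v) ≠ 0 := (hxxpos (u, v)).ne'
      have hcuv : c u v = (l:ℝ) := by
        have : c u v * xx (u, v) = (l:ℝ) * xx (u, v) := h
        exact mul_right_cancel₀ hxxne this
      have hcuv' : ((G.neighborFinset u ∩ G.neighborFinset v).card : ℝ) = (l:ℝ) := hcuv
      exact_mod_cast hcuv'
end

section
/- If G is a graph of order n ≥ 2 in which every two nonadjacent vertices have at most l common neighbors and no two adjacent vertices have a common neighbor (triangle-free), then μ(G) ≤ (1 - l + sqrt((1-l)² + 4l(n-1)))/2. -/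
open Finset Matrix

theorem le_quadratic_root {a b c : ℝ} (h : a ^ 2 ≤ b * a + c) :
    a ≤ (b + Real.sqrt (b ^ 2 + 4 * c)) / 2 := by
  have := Real.abs_le_sqrt (x := 2 * a - b) (y := b ^ 2 + 4 * c) (by nlinarith)
  linarith [le_abs_self (2 * a - b)]

theorem quadratic_root_nonneg (b : ℝ) {c : ℝ} (hc : 0 ≤ c) :
    0 ≤ (b + Real.sqrt (b ^ 2 + 4 * c)) / 2 := by
  have := Real.abs_le_sqrt (x := b) (y := b ^ 2 + 4 * c) (by linarith)
  linarith [neg_abs_le b]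

theorem Matrix.abs_le_sum_row_of_mulVec_eq_smul {ι : Type*} [Fintype ι] {M : Matrix ι ι ℝ}
    (hM : ∀ i j, 0 ≤ M i j) {x : ι → ℝ} {μ : ℝ} (hx : M *ᵥ x = μ • x) {u : ι}
    (hu : ∀ i, |x i| ≤ |x u|) (hxu : x u ≠ 0) : |μ| ≤ ∑ j, M u j := by
  refine le_of_mul_le_mul_right ?_ (abs_pos.mpr hxu)
  calc |μ| * |x u| = |∑ j, M u j * x j| := by
        rw [← abs_mul, ← smul_eq_mul, ← Pi.smul_apply, ← hx]; rfl
    _ ≤ ∑ j, |M u j * x j| := abs_sum_le_sum_abs _ _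
    _ ≤ ∑ j, M u j * |x u| := sum_le_sum fun j _ => by
        rw [abs_mul, abs_of_nonneg (hM u j)]
        exact mul_le_mul_of_nonneg_left (hu j) (hM u j)
    _ = (∑ j, M u j) * |x u| := (sum_mul _ _ _).symm

namespace SimpleGraph

variable {V : Type*} [Fintype V] (G : SimpleGraph V) [DecidableRel G.Adj]

theorem sum_adjMatrix_apply {α : Type*} [NonAssocSemiring α] (u : V) :
    ∑ w, G.adjMatrix α u w = G.degree u := by
  simpa [Matrix.mulVec, dotProduct] using G.adjMatrix_mulVec_const_apply (a := (1 : α)) (v := u)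

variable [DecidableEq V]

theorem adjMatrix_mul_self_apply {α : Type*} [NonAssocSemiring α] (u w : V) :
    (G.adjMatrix α * G.adjMatrix α) u w = #(G.neighborFinset u ∩ G.neighborFinset w) := by
  simp only [adjMatrix_mul_apply, adjMatrix_apply, sum_boole]
  congr 2
  ext v
  simp [adj_comm]

theorem exists_abs_le_degree_and_sq_le_of_hasEigenvalue {μ : ℝ}
    (hμ : Module.End.HasEigenvalue (Matrix.toLin' (G.adjMatrix ℝ)) μ) :
    ∃ u, |μ| ≤ G.degree u ∧
      μ ^ 2 ≤ ((∑ w, #(G.neighborFinset u ∩ G.neighborFinset w) : ℕ) : ℝ) := by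
  obtain ⟨x, hx⟩ := hμ.exists_hasEigenvector
  have hAx : G.adjMatrix ℝ *ᵥ x = μ • x := by simpa using hx.apply_eq_smul
  have hA2x : (G.adjMatrix ℝ * G.adjMatrix ℝ) *ᵥ x = μ ^ 2 • x := by
    rw [← Matrix.mulVec_mulVec, hAx, Matrix.mulVec_smul, hAx, smul_smul, sq]
  obtain ⟨i, hi⟩ := Function.ne_iff.mp hx.2
  obtain ⟨u, -, hu⟩ := exists_max_image univ (fun v => |x v|) ⟨i, mem_univ i⟩
  have hxu : x u ≠ 0 := abs_pos.mp ((abs_pos.mpr hi).trans_le (hu i (mem_univ i)))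
  have hmax : ∀ v, |x v| ≤ |x u| := fun v => hu v (mem_univ v)
  refine ⟨u, ?_, ?_⟩
  · rw [← G.sum_adjMatrix_apply]
    exact Matrix.abs_le_sum_row_of_mulVec_eq_smul (fun i j => by
      rw [adjMatrix_apply]; split_ifs <;> norm_num) hAx hmax hxu
  · have := Matrix.abs_le_sum_row_of_mulVec_eq_smul (fun i j => by
      rw [adjMatrix_mul_self_apply]; positivity) hA2x hmax hxu
    simpa only [adjMatrix_mul_self_apply, abs_of_nonneg (sq_nonneg μ), Nat.cast_sum] using this

variable {G}

theorem inter_neighborFinset_eq_empty_of_adj (htf : G.CliqueFree 3) {u w : V}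
    (huw : G.Adj u w) : G.neighborFinset u ∩ G.neighborFinset w = ∅ := by
  refine eq_empty_of_forall_notMem fun v hv => ?_
  simp only [mem_inter, mem_neighborFinset] at hv
  exact htf {u, w, v} (is3Clique_triple_iff.mpr ⟨huw, hv.1, hv.2⟩)

theorem sum_card_inter_neighborFinset_le (htf : G.CliqueFree 3) {l : ℕ}
    (hl : ∀ u v, u ≠ v → ¬ G.Adj u v → #(G.neighborFinset u ∩ G.neighborFinset v) ≤ l)
    (u : V) :
    ∑ w, #(G.neighborFinset u ∩ G.neighborFinset w) ≤
      G.degree u + l * (Fintype.card V - (G.degree u + 1)) := by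
  set s := insert u (G.neighborFinset u)
  have hu : u ∉ G.neighborFinset u := by simp
  have hfar : ∑ w ∈ sᶜ, #(G.neighborFinset u ∩ G.neighborFinset w) ≤ #sᶜ * l :=
    sum_le_card_nsmul _ _ _ fun w hw => by
      simp only [s, mem_compl, mem_insert, mem_neighborFinset, not_or] at hw
      exact hl u w (Ne.symm hw.1) hw.2
  have hnear : ∑ w ∈ s, #(G.neighborFinset u ∩ G.neighborFinset w) = G.degree u := by
    rw [sum_insert hu, inter_self, card_neighborFinset_eq_degree,
      sum_eq_zero fun w hw => by
        rw [inter_neighborFinset_eq_empty_of_adj htf ((mem_neighborFinset _ _ _).mp hw),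
          card_empty], add_zero]
  calc ∑ w, #(G.neighborFinset u ∩ G.neighborFinset w)
      = ∑ w ∈ sᶜ, #(G.neighborFinset u ∩ G.neighborFinset w) +
          ∑ w ∈ s, #(G.neighborFinset u ∩ G.neighborFinset w) := (sum_compl_add_sum s _).symm
    _ ≤ #sᶜ * l + G.degree u := add_le_add hfar hnear.le
    _ = G.degree u + l * (Fintype.card V - (G.degree u + 1)) := by
      rw [card_compl, card_insert_of_notMem hu, card_neighborFinset_eq_degree]; ring

theorem degree_le_one_of_cliqueFree_three (htf : G.CliqueFree 3)
    (h0 : ∀ u v, u ≠ v → ¬ G.Adj u v → #(G.neighborFinset u ∩ G.neighborFinset v) = 0)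
    (u : V) : G.degree u ≤ 1 := by
  by_contra! h
  rw [← card_neighborFinset_eq_degree] at h
  obtain ⟨a, ha, b, hb, hab⟩ := one_lt_card.mp h
  rw [mem_neighborFinset] at ha hb
  by_cases hadj : G.Adj a b
  · exact htf {u, a, b} (is3Clique_triple_iff.mpr ⟨ha, hb, hadj⟩)
  · refine card_ne_zero.mpr ⟨u, ?_⟩ (h0 a b hab hadj)
    simp [ha.symm, hb.symm]

end SimpleGraph

theorem triangle_free_K2l_bound {n l : ℕ} (hn : 2 ≤ n) (G : SimpleGraph (Fin n))
    [DecidableRel G.Adj] (htf : G.CliqueFree 3)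
    (hK2l : ∀ u v : Fin n, u ≠ v → ¬ G.Adj u v →
      (G.neighborFinset u ∩ G.neighborFinset v).card ≤ l) :
    graphMu G ≤
      (1 - (l : ℝ) +
        Real.sqrt ((1 - (l : ℝ)) ^ 2 + 4 * l * ((n : ℝ) - 1))) / 2 := by
  have hn1 : (1 : ℝ) ≤ n := by norm_cast; omega
  rw [mul_assoc]
  refine Real.sSup_le (fun μ hμ => ?_)
    (quadratic_root_nonneg _ (mul_nonneg l.cast_nonneg (by linarith)))
  obtain ⟨u, hμd, hμ2⟩ := G.exists_abs_le_degree_and_sq_le_of_hasEigenvalue hμ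
  rcases l.eq_zero_or_pos with rfl | hl
  · have hd : (G.degree u : ℝ) ≤ 1 := by
      exact_mod_cast SimpleGraph.degree_le_one_of_cliqueFree_three htf
        (fun u v huv h => Nat.le_zero.mp (hK2l u v huv h)) u
    calc μ ≤ 1 := by linarith [le_abs_self μ]
      _ = _ := by norm_num
  · have hdeg : G.degree u + 1 ≤ n := by simpa using G.degree_lt_card_verts u
    have hsum := SimpleGraph.sum_card_inter_neighborFinset_le htf hK2l u
    rw [Fintype.card_fin] at hsum
    have hμ2' : μ ^ 2 ≤ G.degree u + l * (n - (G.degree u + 1) : ℝ) :=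
      hμ2.trans (by exact_mod_cast hsum)
    have hdμ : (G.degree u - μ) * (1 - l) ≤ 0 :=
      mul_nonpos_of_nonneg_of_nonpos (by linarith [le_abs_self μ])
        (by linarith [show (1 : ℝ) ≤ l by exact_mod_cast hl])
    apply le_quadratic_root
    linarith
end
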